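/- Let (X, 𝓑, m) be a probability space, π : X → Σ a measurable map onto a measurable space Σ, and 𝓒 ∈ 𝓑 with m(𝓒) > 0. Let μ_𝓑 = π_*(m) and μ_𝓒 = π_*(m|_𝓒). Then μ_𝓒 is absolutely continuous with respect to μ_𝓑, and if {m_ξ}_{ξ∈Σ} is a disintegration of m over π, then {(dμ_𝓑/dμ_𝓒)(ξ) · m_ξ|_𝓒}_{ξ} is a disintegration of m|_𝓒 over π (for μ_𝓒-almost every ξ). -/

import Mathlib

/-!
Since the fibre measures are carried by the fibres, `π_*(m|_C)` is `π_*m` with density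
`ξ ↦ m_ξ(C)`. A disintegration need not depend measurably on `ξ`, but this density is still
a.e.-measurable: the lower integrals of `m_ξ(C)` and `m_ξ(Cᶜ)` add up to the integral of their
constant sum `1`. Hence `d(π_*m)/d(π_*(m|_C)) = 1 / m_ξ(C)` almost everywhere, and both claims
follow by cancelling this density against `m_ξ(C)`.
-/

open ENNReal MeasureTheory

/-- `mξ` is a disintegration of `m` over the map `π`: the fiber measures are
probabilities supported on fibers, and `m` is recovered by integrating them
against the pushforward `m.map π`. -/
def IsDisintegration {X S : Type*} [MeasurableSpace X] [MeasurableSpace S]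
    [MeasurableSingletonClass S] (m : Measure X) (π : X → S) (mξ : S → Measure X) : Prop :=
  (∀ ξ, IsProbabilityMeasure (mξ ξ)) ∧
  (∀ᵐ ξ ∂(m.map π), mξ ξ (π ⁻¹' {ξ}) = 1) ∧
  (∀ E : Set X, MeasurableSet E → m E = ∫⁻ ξ, mξ ξ E ∂(m.map π))

open Filter Set

theorem aemeasurable_of_lintegral_add_eq {α : Type*} [MeasurableSpace α] {μ : Measure α}
    {f g : α → ℝ≥0∞} (hfg : AEMeasurable (fun x => f x + g x) μ)
    (hfin : ∫⁻ x, f x + g x ∂μ ≠ ∞)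
    (hadd : ∫⁻ x, f x + g x ∂μ = ∫⁻ x, f x ∂μ + ∫⁻ x, g x ∂μ) :
    AEMeasurable f μ := by
  obtain ⟨k, hk, hkf, hk_eq⟩ := exists_measurable_le_lintegral_eq μ f
  obtain ⟨l, -, hlg, hl_eq⟩ := exists_measurable_le_lintegral_eq μ g
  have hkl : ∫⁻ x, k x + l x ∂μ = ∫⁻ x, f x + g x ∂μ := by
    rw [lintegral_add_left hk, ← hk_eq, ← hl_eq, ← hadd]
  have hsum : (fun x => k x + l x) =ᵐ[μ] fun x => f x + g x :=
    ae_eq_of_ae_le_of_lintegral_le (ae_of_all _ fun x => add_le_add (hkf x) (hlg x))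
      (hkl ▸ hfin) hfg hkl.ge
  refine hk.aemeasurable.congr ?_
  filter_upwards [hsum, ae_lt_top' hfg hfin] with x hx hx_top
  have hg_top : g x ≠ ∞ := ne_top_of_le_ne_top hx_top.ne le_add_self
  refine le_antisymm (hkf x) (ENNReal.le_of_add_le_add_right hg_top ?_)
  exact hx ▸ add_le_add_right (hlg x) _

theorem lintegral_inv_mul_withDensity {α : Type*} [MeasurableSpace α] {μ : Measure α}
    {k g : α → ℝ≥0∞} (hk : AEMeasurable k μ) (hk_top : ∀ᵐ x ∂μ, k x < ∞)
    (hg : ∀ᵐ x ∂μ, k x = 0 → g x = 0) :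
    ∫⁻ x, (k x)⁻¹ * g x ∂(μ.withDensity k) = ∫⁻ x, g x ∂μ := by
  rw [lintegral_withDensity_eq_lintegral_mul_non_measurable₀ μ hk hk_top]
  refine lintegral_congr_ae ?_
  filter_upwards [hk_top, hg] with x htop h0
  rcases eq_or_ne (k x) 0 with h | h
  · simp [h, h0 h]
  · simp [← mul_assoc, ENNReal.mul_inv_cancel h htop.ne]

namespace IsDisintegration

variable {X S : Type*} [MeasurableSpace X] [MeasurableSpace S] [MeasurableSingletonClass S]
  {m : Measure X} {π : X → S} {mξ : S → Measure X}

theorem ae_measure_inter_fiber (hπ : Measurable π) (hdis : IsDisintegration m π mξ) :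
    ∀ᵐ ξ ∂(m.map π), ∀ D, mξ ξ (D ∩ π ⁻¹' {ξ}) = mξ ξ D := by
  filter_upwards [hdis.2.1] with ξ hξ D
  have := hdis.1 ξ
  exact measure_inter_conull ((prob_compl_eq_zero_iff (hπ (measurableSet_singleton ξ))).2 hξ)

theorem ae_measure_preimage_inter (hπ : Measurable π) (hdis : IsDisintegration m π mξ)
    (A : Set S) (D : Set X) :
    ∀ᵐ ξ ∂(m.map π), mξ ξ (π ⁻¹' A ∩ D) = A.indicator (fun ξ => mξ ξ D) ξ := by
  filter_upwards [hdis.ae_measure_inter_fiber hπ] with ξ hξ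
  by_cases hA : ξ ∈ A
  · rw [indicator_of_mem hA, ← hξ, ← hξ D]
    congr 1
    ext x
    simp only [mem_inter_iff, mem_preimage, mem_singleton_iff]
    grind
  · rw [indicator_of_notMem hA, ← hξ]
    convert measure_empty (μ := mξ ξ)
    ext x
    simp only [mem_inter_iff, mem_preimage, mem_singleton_iff, mem_empty_iff_false, iff_false]
    grind

theorem map_restrict_eq_withDensity (hπ : Measurable π) (hdis : IsDisintegration m π mξ)
    {C : Set X} (hC : MeasurableSet C) :
    (m.restrict C).map π = (m.map π).withDensity fun ξ => mξ ξ C := by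
  ext A hA
  rw [Measure.map_apply hπ hA, Measure.restrict_apply (hπ hA), withDensity_apply _ hA,
    hdis.2.2 _ ((hπ hA).inter hC), ← lintegral_indicator hA]
  exact lintegral_congr_ae (hdis.ae_measure_preimage_inter hπ A C)

theorem aemeasurable_apply [IsFiniteMeasure m] (hdis : IsDisintegration m π mξ)
    {E : Set X} (hE : MeasurableSet E) : AEMeasurable (fun ξ => mξ ξ E) (m.map π) := by
  have := hdis.1
  have hsum : ∀ ξ, mξ ξ E + mξ ξ Eᶜ = mξ ξ univ := fun ξ => measure_add_measure_compl hE
  refine aemeasurable_of_lintegral_add_eq (g := fun ξ => mξ ξ Eᶜ) ?_ ?_ ?_ <;>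
    simp only [hsum, measure_univ]
  · exact aemeasurable_const
  · rw [lintegral_one]; exact measure_ne_top _ _
  · rw [← hdis.2.2 E hE, ← hdis.2.2 _ hE.compl, measure_add_measure_compl hE]
    simpa using (hdis.2.2 univ .univ).symm

end IsDisintegration

theorem stmt_12_general {X S : Type*} [MeasurableSpace X] [MeasurableSpace S]
    [MeasurableSingletonClass S]
    (m : Measure X) [IsProbabilityMeasure m] (π : X → S) (hπ : Measurable π)
    (C : Set X) (hC : MeasurableSet C)
    (mξ : S → Measure X) (hdis : IsDisintegration m π mξ) :
    ((m.restrict C).map π) ≪ (m.map π) ∧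
    ((∀ᵐ ξ ∂((m.restrict C).map π),
        ((m.map π).rnDeriv ((m.restrict C).map π) ξ • (mξ ξ).restrict C) (π ⁻¹' {ξ})
          = 1) ∧
      (∀ E : Set X, MeasurableSet E →
        (m.restrict C) E =
          ∫⁻ ξ, ((m.map π).rnDeriv ((m.restrict C).map π) ξ • (mξ ξ).restrict C) E
            ∂((m.restrict C).map π))) := by
  have := hdis.1
  have hν := hdis.map_restrict_eq_withDensity hπ hC
  have hdens := hdis.aemeasurable_apply hC
  have hdens_top : ∀ ξ, mξ ξ C < ∞ := fun ξ => measure_lt_top _ _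
  have hac : (m.restrict C).map π ≪ m.map π := hν ▸ withDensity_absolutelyContinuous _ _
  have hrn : (m.map π).rnDeriv ((m.restrict C).map π) =ᵐ[(m.restrict C).map π]
      fun ξ => (mξ ξ C)⁻¹ := by
    filter_upwards [Measure.inv_rnDeriv hac,
      hac.ae_le (hν ▸ Measure.rnDeriv_withDensity₀ _ hdens)] with ξ hinv hwd
    rw [← hinv, Pi.inv_apply, hwd]
  have hdens_ne_zero : ∀ᵐ ξ ∂((m.restrict C).map π), mξ ξ C ≠ 0 :=
    hν ▸ (ae_withDensity_iff' hdens).2 (ae_of_all _ fun _ h => h)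
  refine ⟨hac, ?_, fun E hE => ?_⟩
  · filter_upwards [hac.ae_le (hdis.ae_measure_inter_fiber hπ), hrn, hdens_ne_zero]
      with ξ hfib hrnξ hξ
    rw [Measure.smul_apply, Measure.restrict_apply (hπ (measurableSet_singleton ξ)),
      inter_comm, hfib, hrnξ, smul_eq_mul, ENNReal.inv_mul_cancel hξ (hdens_top ξ).ne]
  · calc m.restrict C E = ∫⁻ ξ, mξ ξ (E ∩ C) ∂(m.map π) := by
          rw [Measure.restrict_apply hE, hdis.2.2 _ (hE.inter hC)]
      _ = ∫⁻ ξ, (mξ ξ C)⁻¹ * mξ ξ (E ∩ C) ∂((m.restrict C).map π) := by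
          rw [hν, lintegral_inv_mul_withDensity hdens (ae_of_all _ hdens_top)
            (ae_of_all _ fun ξ h => measure_mono_null inter_subset_right h)]
      _ = _ := lintegral_congr_ae <| by
          filter_upwards [hrn] with ξ hξ
          rw [Measure.smul_apply, Measure.restrict_apply hE, hξ, smul_eq_mul]

theorem stmt_12 {X S : Type*} [MeasurableSpace X] [MeasurableSpace S]
    [MeasurableSingletonClass S]
    (m : Measure X) [IsProbabilityMeasure m] (π : X → S) (hπ : Measurable π)
    (C : Set X) (hC : MeasurableSet C) (hCpos : 0 < m C)
    (mξ : S → Measure X) (hdis : IsDisintegration m π mξ) :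
    ((m.restrict C).map π) ≪ (m.map π) ∧
    ((∀ᵐ ξ ∂((m.restrict C).map π),
        ((m.map π).rnDeriv ((m.restrict C).map π) ξ • (mξ ξ).restrict C) (π ⁻¹' {ξ})
          = 1) ∧
      (∀ E : Set X, MeasurableSet E →
        (m.restrict C) E =
          ∫⁻ ξ, ((m.map π).rnDeriv ((m.restrict C).map π) ξ • (mξ ξ).restrict C) E
            ∂((m.restrict C).map π))) :=
  stmt_12_general m π hπ C hC mξ hdis
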